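/- Let E and F be real Banach lattices, ε ≥ 0, and T : E → F a positive bounded linear operator which is ε-disjointness preserving. Then for any pairwise disjoint x₁, …, x_n ∈ E, ‖Σ_{i=1}^n |Tx_i| − ⋁_{i=1}^n |Tx_i|‖ ≤ 256·ε·‖Σ_{i=1}^n x_i‖. -/

import Mathlib

/-!
Put `c i = T |x i| ≥ 0`. Positivity gives `|T (x i)| ≤ c i`, and replacing the `|T (x i)|` by the
larger `c i` can only increase `∑ - ⋁`. For every `G ⊆ {1, …, n}` the elements `∑_{i ∈ G} |x i|`
and `∑_{i ∉ G} |x i|` are disjoint with norm at most `‖∑ x i‖`, so `ε`-disjointness preservation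
bounds `‖c_G ⊓ c_{Gᶜ}‖ ≤ ε ‖∑ x i‖`, where `c_G = ∑_{i ∈ G} c i`. It remains to average over all
`2 ^ n` splittings; this is an inequality in any lattice-ordered group with nonnegative `c i`,
`2 ^ n • (∑ c - ⋁ c) ≤ 4 • ∑_G c_G ⊓ c_{Gᶜ}`.

Writing `y_G = 2 c_G - ∑ c`, it follows from `2 • ∑_G |y_G| ≤ 2 ^ n • (∑ c + ⋁ c)`, proved by
induction on the index set: adjoining an index `a` turns each `|y_G|` into
`|y_G - c a| + |y_G + c a| = 2 • (|y_G| ⊔ c a)`, and pairing `G` with `G ∪ {j}`, whose `y` differ by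
`2 c j`, bounds the loss `∑_G |y_G| ⊓ c a` from below by `(c j ⊓ c a)` times half the number of
splittings, for every `j`.
-/

open Finset

section LatticeOrderedGroup

variable {α : Type*} [Lattice α] [AddCommGroup α] [IsOrderedAddMonoid α]

lemma two_nsmul_sup (a b : α) : 2 • (a ⊔ b) = 2 • a ⊔ 2 • b := by
  have hmid : a + b ≤ 2 • a ⊔ 2 • b := by
    rw [← sub_nonneg, sup_sub]
    convert abs_nonneg (a - b) using 1
    rw [abs, neg_sub]
    congr 1 <;> abel
  refine le_antisymm ?_ (sup_le (nsmul_le_nsmul_right le_sup_left 2)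
    (nsmul_le_nsmul_right le_sup_right 2))
  rw [two_nsmul, add_sup, sup_add, sup_add, ← two_nsmul, ← two_nsmul, add_comm b a]
  exact sup_le (sup_le le_sup_left hmid) (sup_le hmid le_sup_right)

lemma two_pow_nsmul_sup (r : ℕ) (a b : α) : 2 ^ r • (a ⊔ b) = 2 ^ r • a ⊔ 2 ^ r • b := by
  induction r with
  | zero => simp
  | succ r ih => simp only [pow_succ, mul_nsmul, ih, two_nsmul_sup]

lemma two_pow_nsmul_sup' {ι : Type*} (r : ℕ) {s : Finset ι} (hs : s.Nonempty) (f : ι → α) :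
    2 ^ r • s.sup' hs f = s.sup' hs fun i => 2 ^ r • f i :=
  map_finset_sup' (SupHom.mk (fun x : α => 2 ^ r • x) (two_pow_nsmul_sup r)) hs f

lemma abs_sub_add_abs_add {d : α} (hd : 0 ≤ d) (y : α) :
    |y - d| + |y + d| = 2 • (|y| ⊔ d) := by
  have hd' : -(2 • d) ≤ (2 • d : α) := neg_le_self (nsmul_nonneg hd 2)
  calc |y - d| + |y + d|
      = ((y - d + (y + d)) ⊔ (-(y - d) + (y + d)))
          ⊔ ((y - d + -(y + d)) ⊔ (-(y - d) + -(y + d))) := by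
        rw [abs, abs, add_sup, sup_add, sup_add]
    _ = (2 • y ⊔ 2 • d) ⊔ (-(2 • d) ⊔ 2 • -y) := by congr 2 <;> module
    _ = 2 • y ⊔ 2 • -y ⊔ 2 • d := by
        rw [sup_comm (-(2 • d)), ← sup_assoc, sup_right_comm (2 • y), sup_assoc _ (2 • d),
          sup_eq_left.2 hd']
    _ = 2 • (|y| ⊔ d) := by rw [two_nsmul_sup, abs, two_nsmul_sup]

lemma add_inf_le_inf_add_inf {a b c : α} (ha : 0 ≤ a) (hb : 0 ≤ b) (hc : 0 ≤ c) :
    (a + b) ⊓ c ≤ a ⊓ c + b ⊓ c := by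
  rw [add_inf, inf_add, inf_add]
  refine le_inf (le_inf inf_le_left ?_) (le_inf ?_ ?_) <;> refine inf_le_right.trans ?_
  · exact le_add_of_nonneg_right hb
  · exact le_add_of_nonneg_left ha
  · exact le_add_of_nonneg_left hc

lemma sum_inf_eq_zero {ι : Type*} {s : Finset ι} {f : ι → α} {w : α} (hf : ∀ i ∈ s, 0 ≤ f i)
    (hw : 0 ≤ w) (h : ∀ i ∈ s, f i ⊓ w = 0) : (∑ i ∈ s, f i) ⊓ w = 0 := by
  induction s using Finset.cons_induction with
  | empty => simpa using hw
  | cons a t hat ih =>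
    simp only [mem_cons, forall_eq_or_imp] at hf h
    refine le_antisymm ?_ (le_inf (sum_nonneg (by simpa using hf)) hw)
    calc (∑ i ∈ cons a t hat, f i) ⊓ w ≤ f a ⊓ w + (∑ i ∈ t, f i) ⊓ w := by
          rw [sum_cons]; exact add_inf_le_inf_add_inf hf.1 (sum_nonneg hf.2) hw
      _ = 0 := by rw [h.1, ih hf.2 h.2, add_zero]

lemma abs_add_of_abs_inf_abs_eq_zero {a b : α} (h : |a| ⊓ |b| = 0) : |a + b| = |a| + |b| := by
  have hsup : ∀ {u v : α}, |u| ⊓ |v| = 0 → |u| ⊔ |v| = |u| + |v| := by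
    intro u v huv
    rw [← inf_add_sup |u|, huv, zero_add]
  have hle : ∀ {u v : α}, |u| ⊓ |v| = 0 → |u| ≤ |u + v| := by
    intro u v huv
    have huv' : |u| ⊔ |v| - |v| = |u| := by rw [hsup huv, add_sub_cancel_right]
    rw [← huv', sup_sub, sub_self]
    refine sup_le ?_ (abs_nonneg _)
    rw [sub_le_iff_le_add]
    simpa using abs_add_le (u + v) (-v)
  refine le_antisymm (abs_add_le a b) ?_
  rw [← hsup h]
  exact sup_le (hle h) (add_comm a b ▸ hle (inf_comm |a| |b| ▸ h))

lemma abs_sum_of_pairwise_abs_inf_abs_eq_zero {ι : Type*} {s : Finset ι} {x : ι → α}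
    (h : ∀ i ∈ s, ∀ j ∈ s, i ≠ j → |x i| ⊓ |x j| = 0) :
    |∑ i ∈ s, x i| = ∑ i ∈ s, |x i| := by
  induction s using Finset.cons_induction with
  | empty => simp
  | cons a t hat ih =>
    have ih' := ih fun i hi j hj => h i (mem_cons_of_mem hi) j (mem_cons_of_mem hj)
    have hdisj : |x a| ⊓ |∑ i ∈ t, x i| = 0 := by
      rw [ih', inf_comm]
      refine sum_inf_eq_zero (fun i _ => abs_nonneg _) (abs_nonneg _) fun i hi => ?_
      exact h i (mem_cons_of_mem hi) a (mem_cons_self a t) (ne_of_mem_of_not_mem hi hat)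
    rw [sum_cons, sum_cons, abs_add_of_abs_inf_abs_eq_zero hdisj, ih']

lemma sum_sub_sup'_le_sum_sub_sup' {ι : Type*} {s : Finset ι} (hs : s.Nonempty) {a c : ι → α}
    (h : ∀ i ∈ s, a i ≤ c i) :
    ∑ i ∈ s, a i - s.sup' hs a ≤ ∑ i ∈ s, c i - s.sup' hs c := by
  have hsup : s.sup' hs c ≤ s.sup' hs a + ∑ i ∈ s, (c i - a i) := by
    refine sup'_le hs _ fun i hi => ?_
    calc c i = a i + (c i - a i) := by abel
      _ ≤ s.sup' hs a + ∑ i ∈ s, (c i - a i) :=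
        add_le_add (le_sup' a hi)
          (single_le_sum (f := fun i => c i - a i) (fun j hj => sub_nonneg.2 (h j hj)) hi)
  rw [sum_sub_distrib] at hsup
  calc ∑ i ∈ s, a i - s.sup' hs a
      = ∑ i ∈ s, c i - (s.sup' hs a + (∑ i ∈ s, c i - ∑ i ∈ s, a i)) := by abel
    _ ≤ ∑ i ∈ s, c i - s.sup' hs c := sub_le_sub_left hsup _

section Powerset

variable {ι : Type*} [DecidableEq ι]

lemma sum_powerset_insert_abs_two_nsmul_sum_sub (c : ι → α) {s : Finset ι} {a : ι} (ha : a ∉ s)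
    (hca : 0 ≤ c a) :
    ∑ G ∈ (insert a s).powerset, |2 • ∑ i ∈ G, c i - ∑ i ∈ insert a s, c i|
      = 2 • ∑ G ∈ s.powerset, (|2 • ∑ i ∈ G, c i - ∑ i ∈ s, c i| ⊔ c a) := by
  rw [sum_powerset_insert ha, sum_insert ha, smul_sum, ← sum_add_distrib]
  refine sum_congr rfl fun G hG => ?_
  rw [sum_insert fun haG => ha (mem_powerset.1 hG haG), ← abs_sub_add_abs_add hca]
  congr 2 <;> module

lemma two_pow_card_nsmul_inf_le_sum_powerset (c : ι → α) {s : Finset ι} {j : ι} (hj : j ∈ s)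
    (hcj : 0 ≤ c j) {d : α} (hd : 0 ≤ d) :
    2 ^ #s • (c j ⊓ d) ≤ 2 • ∑ G ∈ s.powerset, (|2 • ∑ i ∈ G, c i - ∑ i ∈ s, c i| ⊓ d) := by
  generalize ∑ i ∈ s, c i = S
  obtain ⟨t, hjt, rfl⟩ : ∃ t, j ∉ t ∧ s = insert j t :=
    ⟨s.erase j, notMem_erase j s, (insert_erase hj).symm⟩
  rw [sum_powerset_insert hjt, ← sum_add_distrib, card_insert_of_notMem hjt, pow_succ, mul_nsmul]
  refine nsmul_le_nsmul_right ?_ 2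
  rw [← card_powerset, ← sum_const]
  refine sum_le_sum fun G hG => ?_
  set Y := 2 • ∑ i ∈ G, c i - S
  have hY : 2 • ∑ i ∈ insert j G, c i - S = Y + 2 • c j := by
    rw [sum_insert fun hjG => hjt (mem_powerset.1 hG hjG)]
    module
  have hpair : 2 • c j ≤ |Y| + |Y + 2 • c j| := by
    calc 2 • c j = (Y + 2 • c j) + -Y := by abel
      _ ≤ |Y + 2 • c j| + |Y| := add_le_add (le_abs_self _) (neg_le_abs Y)
      _ = |Y| + |Y + 2 • c j| := add_comm _ _
  rw [hY]
  calc c j ⊓ d ≤ (2 • c j) ⊓ d := inf_le_inf_right d (two_nsmul (c j) ▸ le_add_of_nonneg_left hcj)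
    _ ≤ (|Y| + |Y + 2 • c j|) ⊓ d := inf_le_inf_right d hpair
    _ ≤ |Y| ⊓ d + |Y + 2 • c j| ⊓ d := add_inf_le_inf_add_inf (abs_nonneg _) (abs_nonneg _) hd

lemma two_nsmul_sum_powerset_abs_le (c : ι → α) {s : Finset ι} (hs : s.Nonempty)
    (hc : ∀ i ∈ s, 0 ≤ c i) :
    2 • ∑ G ∈ s.powerset, |2 • ∑ i ∈ G, c i - ∑ i ∈ s, c i|
      ≤ 2 ^ #s • (∑ i ∈ s, c i + s.sup' hs c) := by
  induction hs using Finset.Nonempty.cons_induction with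
  | singleton a =>
    have hca := hc a (mem_singleton_self a)
    have h := sum_powerset_insert_abs_two_nsmul_sum_sub c (notMem_empty a) hca
    rw [insert_empty] at h
    rw [h]
    simp only [powerset_empty, sum_singleton, sum_empty, nsmul_zero, sub_zero, abs_zero,
      sup'_singleton, card_singleton, pow_one]
    rw [sup_eq_right.2 hca]
    exact le_of_eq (by module)
  | cons a t hat ht ih =>
    simp only [mem_cons, forall_eq_or_imp] at hc
    obtain ⟨hca, hct⟩ := hc
    rw [sup'_cons ht, card_cons, cons_eq_insert,
      sum_powerset_insert_abs_two_nsmul_sum_sub c hat hca, sum_insert hat]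
    set Y : Finset ι → α := fun G => |2 • ∑ i ∈ G, c i - ∑ i ∈ t, c i|
    set M := t.sup' ht c
    have hsup_inf : ∑ G ∈ t.powerset, (Y G ⊔ c a) + ∑ G ∈ t.powerset, (Y G ⊓ c a)
        = ∑ G ∈ t.powerset, Y G + 2 ^ #t • c a := by
      rw [← sum_add_distrib, ← card_powerset, ← sum_const, ← sum_add_distrib]
      exact sum_congr rfl fun G _ => (add_comm _ _).trans (inf_add_sup _ _)
    have hpair : 2 ^ #t • (M ⊓ c a) ≤ 2 • ∑ G ∈ t.powerset, (Y G ⊓ c a) := by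
      let := AddCommGroup.toDistribLattice α
      rw [sup'_inf_distrib_right, two_pow_nsmul_sup']
      exact sup'_le ht _ fun j hj =>
        two_pow_card_nsmul_inf_le_sum_powerset c hj (hct j hj) hca
    have hM : c a ⊔ M = c a + M - M ⊓ c a := by
      rw [← inf_add_sup (c a) M, inf_comm]; abel
    rw [eq_sub_of_add_eq hsup_inf, hM]
    calc 2 • 2 • (∑ G ∈ t.powerset, Y G + 2 ^ #t • c a - ∑ G ∈ t.powerset, (Y G ⊓ c a))
        = 2 • (2 • ∑ G ∈ t.powerset, Y G) + 2 ^ #t • (4 • c a)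
          - 2 • (2 • ∑ G ∈ t.powerset, (Y G ⊓ c a)) := by module
      _ ≤ 2 • (2 ^ #t • (∑ i ∈ t, c i + M)) + 2 ^ #t • (4 • c a) - 2 • (2 ^ #t • (M ⊓ c a)) :=
        sub_le_sub (add_le_add_left (nsmul_le_nsmul_right (ih hct) 2) _)
          (nsmul_le_nsmul_right hpair 2)
      _ = 2 ^ (#t + 1) • (c a + ∑ i ∈ t, c i + (c a + M - M ⊓ c a)) := by module

lemma two_pow_card_nsmul_sum_sub_sup'_le (c : ι → α) {s : Finset ι} (hs : s.Nonempty)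
    (hc : ∀ i ∈ s, 0 ≤ c i) :
    2 ^ #s • (∑ i ∈ s, c i - s.sup' hs c)
      ≤ 4 • ∑ G ∈ s.powerset, ((∑ i ∈ G, c i) ⊓ ∑ i ∈ s \ G, c i) := by
  have hinf : ∀ G ∈ s.powerset, 2 • ((∑ i ∈ G, c i) ⊓ ∑ i ∈ s \ G, c i)
      = ∑ i ∈ s, c i - |2 • ∑ i ∈ G, c i - ∑ i ∈ s, c i| := by
    intro G hG
    rw [two_nsmul_inf_eq_add_sub_abs_sub, ← sum_sdiff (mem_powerset.1 hG), abs_sub_comm,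
      add_comm (∑ i ∈ s \ G, c i)]
    congr 2
    module
  calc 2 ^ #s • (∑ i ∈ s, c i - s.sup' hs c)
      = 2 ^ #s • (2 • ∑ i ∈ s, c i) - 2 ^ #s • (∑ i ∈ s, c i + s.sup' hs c) := by module
    _ ≤ 2 ^ #s • (2 • ∑ i ∈ s, c i)
          - 2 • ∑ G ∈ s.powerset, |2 • ∑ i ∈ G, c i - ∑ i ∈ s, c i| :=
      sub_le_sub_left (two_nsmul_sum_powerset_abs_le c hs hc) _
    _ = 2 • ∑ G ∈ s.powerset, (∑ i ∈ s, c i - |2 • ∑ i ∈ G, c i - ∑ i ∈ s, c i|) := by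
      rw [sum_sub_distrib, sum_const, card_powerset]; module
    _ = 4 • ∑ G ∈ s.powerset, ((∑ i ∈ G, c i) ⊓ ∑ i ∈ s \ G, c i) := by
      rw [← sum_congr rfl hinf, ← smul_sum]; module

end Powerset

end LatticeOrderedGroup

lemma abs_map_le_map_abs {E F 𝓕 : Type*} [Lattice E] [AddCommGroup E] [IsOrderedAddMonoid E]
    [Lattice F] [AddCommGroup F] [IsOrderedAddMonoid F] [FunLike 𝓕 E F] [AddMonoidHomClass 𝓕 E F]
    (T : 𝓕) (hT : ∀ x, 0 ≤ x → 0 ≤ T x) (x : E) : |T x| ≤ T |x| := by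
  refine abs_le'.2 ⟨sub_nonneg.1 ?_, sub_nonneg.1 ?_⟩
  · rw [← map_sub]; exact hT _ (sub_nonneg.2 (le_abs_self x))
  · rw [← map_neg, ← map_sub]; exact hT _ (sub_nonneg.2 (neg_le_abs x))

section NormedLattice

variable {E : Type*} [NormedAddCommGroup E] [Lattice E] [IsOrderedAddMonoid E] [HasSolidNorm E]

lemma mul_norm_le_mul_norm_of_nsmul_le [NormedSpace ℝ E] {a b : E} (ha : 0 ≤ a) {m k : ℕ}
    (h : m • a ≤ k • b) : (m : ℝ) * ‖a‖ ≤ k * ‖b‖ := by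
  have hsolid : ‖m • a‖ ≤ ‖k • b‖ := by
    refine HasSolidNorm.solid ?_
    rw [abs_of_nonneg (nsmul_nonneg ha m)]
    exact h.trans (le_abs_self _)
  rw [RCLike.norm_nsmul ℝ, nsmul_eq_mul] at hsolid
  exact hsolid.trans norm_nsmul_le

lemma norm_sum_map_abs_inf_le {F 𝓕 ι : Type*} [NormedAddCommGroup F] [Lattice F]
    [IsOrderedAddMonoid F] [FunLike 𝓕 E F] [AddMonoidHomClass 𝓕 E F] [DecidableEq ι] {ε : ℝ}
    (hε : 0 ≤ ε) (T : 𝓕) (hpos : ∀ x : E, 0 ≤ x → 0 ≤ T x)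
    (hDP : ∀ x y : E, |x| ⊓ |y| = 0 → ‖|T x| ⊓ |T y|‖ ≤ ε * max ‖x‖ ‖y‖)
    {s G : Finset ι} (hG : G ⊆ s) {x : ι → E}
    (hdisj : ∀ i ∈ s, ∀ j ∈ s, i ≠ j → |x i| ⊓ |x j| = 0) :
    ‖(∑ i ∈ G, T |x i|) ⊓ ∑ i ∈ s \ G, T |x i|‖ ≤ ε * ‖∑ i ∈ s, x i‖ := by
  have hnonneg : ∀ H : Finset ι, 0 ≤ ∑ i ∈ H, |x i| := fun H => sum_nonneg fun i _ => abs_nonneg _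
  have hnorm : ∀ H ⊆ s, ‖∑ i ∈ H, |x i|‖ ≤ ‖∑ i ∈ s, x i‖ := by
    intro H hH
    refine HasSolidNorm.solid ?_
    rw [abs_of_nonneg (hnonneg H), abs_sum_of_pairwise_abs_inf_abs_eq_zero hdisj]
    exact sum_le_sum_of_subset_of_nonneg hH fun i _ _ => abs_nonneg _
  have hsplit : |(∑ i ∈ G, |x i|)| ⊓ |(∑ i ∈ s \ G, |x i|)| = 0 := by
    rw [abs_of_nonneg (hnonneg _), abs_of_nonneg (hnonneg _)]
    refine sum_inf_eq_zero (fun i _ => abs_nonneg _) (hnonneg _) fun i hi => ?_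
    rw [inf_comm]
    refine sum_inf_eq_zero (fun i _ => abs_nonneg _) (abs_nonneg _) fun j hj => ?_
    exact hdisj j (sdiff_subset hj) i (hG hi) fun hji => (mem_sdiff.1 hj).2 (hji ▸ hi)
  have h := hDP _ _ hsplit
  rw [abs_of_nonneg (hpos _ (hnonneg _)), abs_of_nonneg (hpos _ (hnonneg _)), map_sum, map_sum] at h
  exact h.trans (mul_le_mul_of_nonneg_left (max_le (hnorm G hG) (hnorm _ sdiff_subset)) hε)

end NormedLattice

theorem stmt4_general (E F : Type*)
    [NormedAddCommGroup E] [Lattice E] [IsOrderedAddMonoid E] [HasSolidNorm E] [NormedSpace ℝ E]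
    [NormedAddCommGroup F] [Lattice F] [IsOrderedAddMonoid F] [HasSolidNorm F] [NormedSpace ℝ F]
    (ε : ℝ) (hε : 0 ≤ ε) (T : E →L[ℝ] F)
    (hpos : ∀ x : E, 0 ≤ x → 0 ≤ T x)
    (hDP : ∀ x y : E, |x| ⊓ |y| = 0 → ‖|T x| ⊓ |T y|‖ ≤ ε * max ‖x‖ ‖y‖)
    (n : ℕ) (hn : 0 < n) (x : Fin n → E)
    (hdisj : ∀ i j, i ≠ j → |x i| ⊓ |x j| = 0) :
    ‖(∑ i, |T (x i)|) -
        (univ : Finset (Fin n)).sup' (univ_nonempty_iff.2 (Fin.pos_iff_nonempty.1 hn))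
          (fun i => |T (x i)|)‖ ≤
      256 * ε * ‖∑ i, x i‖ := by
  classical
  set hne := univ_nonempty_iff.2 (Fin.pos_iff_nonempty.1 hn)
  set D := ∑ i, |T (x i)| - univ.sup' hne fun i => |T (x i)|
  set Z := ∑ G ∈ univ.powerset, ((∑ i ∈ G, T |x i|) ⊓ ∑ i ∈ univ \ G, T |x i|)
  have hD : 0 ≤ D := sub_nonneg.2 <|
    sup'_le _ _ fun i _ => single_le_sum (fun j _ => abs_nonneg (T (x j))) (mem_univ i)
  have hDZ : 2 ^ n • D ≤ 4 • Z := by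
    have h := two_pow_card_nsmul_sum_sub_sup'_le (fun i => T |x i|) hne
      fun i _ => hpos _ (abs_nonneg _)
    rw [card_univ, Fintype.card_fin] at h
    exact (nsmul_le_nsmul_right (sum_sub_sup'_le_sum_sub_sup' hne
      fun i _ => abs_map_le_map_abs T hpos (x i)) _).trans h
  have hZ : ‖Z‖ ≤ 2 ^ n * (ε * ‖∑ i, x i‖) := by
    refine (norm_sum_le _ _).trans ((sum_le_sum fun G hG => norm_sum_map_abs_inf_le hε T hpos hDP
      (mem_powerset.1 hG) fun i _ j _ => hdisj i j).trans_eq ?_)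
    simp
  have hnorm : (2 : ℝ) ^ n * ‖D‖ ≤ 2 ^ n * (4 * (ε * ‖∑ i, x i‖)) :=
    calc (2 : ℝ) ^ n * ‖D‖ ≤ 4 * ‖Z‖ := by exact_mod_cast mul_norm_le_mul_norm_of_nsmul_le hD hDZ
      _ ≤ 4 * (2 ^ n * (ε * ‖∑ i, x i‖)) := by gcongr
      _ = 2 ^ n * (4 * (ε * ‖∑ i, x i‖)) := by ring
  calc ‖D‖ ≤ 4 * (ε * ‖∑ i, x i‖) := le_of_mul_le_mul_left hnorm (by positivity)
    _ ≤ 256 * ε * ‖∑ i, x i‖ := by nlinarith [mul_nonneg hε (norm_nonneg (∑ i, x i))]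

/-- If `T` is a positive `ε`-disjointness preserving operator, then for any
pairwise disjoint `x₁, …, x_n`, `‖Σ_i |Tx_i| - ⋁_i |Tx_i|‖ ≤ 256 ε ‖Σ_i x_i‖`. -/
theorem stmt4 (E F : Type*)
    [NormedAddCommGroup E] [Lattice E] [IsOrderedAddMonoid E] [HasSolidNorm E] [NormedSpace ℝ E] [CompleteSpace E]
    [NormedAddCommGroup F] [Lattice F] [IsOrderedAddMonoid F] [HasSolidNorm F] [NormedSpace ℝ F] [CompleteSpace F]
    (ε : ℝ) (hε : 0 ≤ ε) (T : E →L[ℝ] F)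
    (hpos : ∀ x : E, 0 ≤ x → 0 ≤ T x)
    (hDP : ∀ x y : E, |x| ⊓ |y| = 0 → ‖|T x| ⊓ |T y|‖ ≤ ε * max ‖x‖ ‖y‖)
    (n : ℕ) (hn : 0 < n) (x : Fin n → E)
    (hdisj : ∀ i j, i ≠ j → |x i| ⊓ |x j| = 0) :
    ‖(∑ i, |T (x i)|) -
        (univ : Finset (Fin n)).sup' (univ_nonempty_iff.2 (Fin.pos_iff_nonempty.1 hn))
          (fun i => |T (x i)|)‖ ≤
      256 * ε * ‖∑ i, x i‖ :=
  stmt4_general E F ε hε T hpos hDP n hn x hdisj
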